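/- Let S be a tree structure on {1,…,n} with splits partitioned as S = S^(1) ⊔ … ⊔ S^(p), let y ∈ ℝⁿ with mean ȳ, and for each feature k let ŷ^(k) := ȳ·1 + Σ_{s∈S^(k)} (⟨ψ_s, y⟩ / ‖ψ_s‖²) ψ_s be the partial model predictions (Saabas scores) for feature k. Then MDI(k; S, y) = n^{-1} Σ_{i=1}^n (ŷ_i^(k) − ȳ)(y_i − ȳ); that is, the MDI of feature k equals the sample covariance between the partial model predictions and the responses. -/

import Mathlib

open Finset MeasureTheory RealInnerProductSpace

/-- A split of a node into two disjoint nonempty children. -/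
structure Split (n : ℕ) where
  left : Finset (Fin n)
  right : Finset (Fin n)
  left_nonempty : left.Nonempty
  right_nonempty : right.Nonempty
  disjoint : Disjoint left right

/-- The node being split is the union of the two children. -/
def Split.node {n : ℕ} (s : Split n) : Finset (Fin n) := s.left ∪ s.right

/-- Mean of the responses `y` over a subset `t` of samples. -/
noncomputable def meanOn {n : ℕ} (y : Fin n → ℝ) (t : Finset (Fin n)) : ℝ :=
  (∑ i ∈ t, y i) / t.card

/-- Impurity decrease of a split. -/
noncomputable def impurityDecrease {n : ℕ} (s : Split n) (y : Fin n → ℝ) : ℝ :=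
  (s.node.card : ℝ)⁻¹ *
    (∑ i ∈ s.node, (y i - meanOn y s.node) ^ 2
      - ∑ i ∈ s.left, (y i - meanOn y s.left) ^ 2
      - ∑ i ∈ s.right, (y i - meanOn y s.right) ^ 2)

/-- The local decision stump associated to a split. -/
noncomputable def stump {n : ℕ} (s : Split n) : EuclideanSpace ℝ (Fin n) := WithLp.toLp 2 (fun i =>
  if i ∈ s.left then (s.right.card : ℝ) / Real.sqrt (s.left.card * s.right.card)
  else if i ∈ s.right then -(s.left.card : ℝ) / Real.sqrt (s.left.card * s.right.card)
  else 0)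

/-- The constant vector of all ones. -/
noncomputable def ones (n : ℕ) : EuclideanSpace ℝ (Fin n) := WithLp.toLp 2 (fun _ => (1 : ℝ))

/-- A tree structure: any two distinct splits have disjoint or suitably nested nodes. -/
def IsTreeStructure {n : ℕ} (S : Finset (Split n)) : Prop :=
  ∀ s ∈ S, ∀ s' ∈ S, s ≠ s' →
    s.node ∩ s'.node = ∅ ∨ s'.node ⊆ s.left ∨ s'.node ⊆ s.right ∨
      s.node ⊆ s'.left ∨ s.node ⊆ s'.right

/-- Mean decrease in impurity (MDI) of feature `k`, where `feat` assigns to each split the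
feature it splits on. -/
noncomputable def MDI {n p : ℕ} (S : Finset (Split n)) (feat : Split n → Fin p)
    (k : Fin p) (y : Fin n → ℝ) : ℝ :=
  (n : ℝ)⁻¹ * ∑ s ∈ S.filter (fun s => feat s = k), (s.node.card : ℝ) * impurityDecrease s y

/-- A rooted tree structure: a finite nonempty set of splits with pairwise distinct nodes,
exactly one of which is the full sample set, and every non-root node is a child of some split. -/
def IsRootedTree {n : ℕ} (S : Finset (Split n)) : Prop :=
  S.Nonempty ∧ Set.InjOn Split.node (↑S : Set (Split n)) ∧ (∃ s ∈ S, s.node = Finset.univ) ∧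
    ∀ s ∈ S, s.node ≠ Finset.univ → ∃ s' ∈ S, s.node = s'.left ∨ s.node = s'.right

/-- The leaves of a rooted tree structure: children of splits that are not themselves split. -/
def leafSet {n : ℕ} (S : Finset (Split n)) : Finset (Finset (Fin n)) :=
  (S.image Split.left ∪ S.image Split.right).filter fun t => ∀ s ∈ S, s.node ≠ t

section AuxLemmas

variable {n : ℕ}

lemma stump_left' {s : Split n} {i : Fin n} (h : i ∈ s.left) :
    stump s i = (s.right.card : ℝ) / Real.sqrt (s.left.card * s.right.card) := by
  simp [stump, h]

lemma stump_right' {s : Split n} {i : Fin n} (h : i ∈ s.right) :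
    stump s i = -(s.left.card : ℝ) / Real.sqrt (s.left.card * s.right.card) := by
  have h' : i ∉ s.left := fun hl => (Finset.disjoint_left.mp s.disjoint hl h)
  simp [stump, h, h']

lemma stump_off {s : Split n} {i : Fin n} (h : i ∉ s.node) : stump s i = 0 := by
  simp only [Split.node, Finset.mem_union, not_or] at h
  simp [stump, h.1, h.2]

lemma sqrt_pos' (s : Split n) : 0 < Real.sqrt (s.left.card * s.right.card) := by
  apply Real.sqrt_pos.mpr
  have h1 := s.left_nonempty.card_pos
  have h2 := s.right_nonempty.card_pos
  positivity

lemma sum_stump_mul (s : Split n) (f : Fin n → ℝ) :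
    ∑ j, stump s j * f j
      = ((s.right.card : ℝ) * ∑ j ∈ s.left, f j - (s.left.card : ℝ) * ∑ j ∈ s.right, f j)
        / Real.sqrt (s.left.card * s.right.card) := by
  calc ∑ j, stump s j * f j
      = ∑ j ∈ s.left ∪ s.right, stump s j * f j := by
        rw [Finset.sum_subset (Finset.subset_univ (s.left ∪ s.right))
          (fun x _ hx => by rw [stump_off hx, zero_mul])]
    _ = ∑ j ∈ s.left, ((s.right.card : ℝ) / Real.sqrt (s.left.card * s.right.card)) * f j
        + ∑ j ∈ s.right,
            (-(s.left.card : ℝ) / Real.sqrt (s.left.card * s.right.card)) * f j := by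
        rw [Finset.sum_union s.disjoint]
        congr 1
        · exact Finset.sum_congr rfl fun i hi => by rw [stump_left' hi]
        · exact Finset.sum_congr rfl fun i hi => by rw [stump_right' hi]
    _ = _ := by rw [← Finset.mul_sum, ← Finset.mul_sum]; ring

lemma sum_stump (s : Split n) : ∑ j, stump s j = 0 := by
  have h := sum_stump_mul s (fun _ => 1)
  simp only [mul_one] at h
  rw [h]
  simp [mul_comm]

lemma sum_stump_sq (s : Split n) :
    ∑ j, stump s j ^ 2 = (s.left.card : ℝ) + s.right.card := by
  have hr := (sqrt_pos' s).ne'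
  have hr2 : Real.sqrt ((s.left.card : ℝ) * s.right.card)
      * Real.sqrt ((s.left.card : ℝ) * s.right.card) = (s.left.card : ℝ) * s.right.card :=
    Real.mul_self_sqrt (by positivity)
  have h : ∑ j, stump s j ^ 2 = ∑ j, stump s j * stump s j :=
    Finset.sum_congr rfl fun j _ => sq (stump s j) ▸ rfl
  rw [h, sum_stump_mul s (stump s)]
  have hl : ∑ j ∈ s.left, stump s j
      = (s.left.card : ℝ) * ((s.right.card : ℝ) / Real.sqrt (s.left.card * s.right.card)) :=
    calc ∑ j ∈ s.left, stump s j
        = ∑ _j ∈ s.left, ((s.right.card : ℝ) / Real.sqrt (s.left.card * s.right.card)) :=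
          Finset.sum_congr rfl fun i hi => stump_left' hi
      _ = _ := by rw [Finset.sum_const, nsmul_eq_mul]
  have hrr : ∑ j ∈ s.right, stump s j
      = (s.right.card : ℝ) * (-(s.left.card : ℝ) / Real.sqrt (s.left.card * s.right.card)) :=
    calc ∑ j ∈ s.right, stump s j
        = ∑ _j ∈ s.right, (-(s.left.card : ℝ) / Real.sqrt (s.left.card * s.right.card)) :=
          Finset.sum_congr rfl fun i hi => stump_right' hi
      _ = _ := by rw [Finset.sum_const, nsmul_eq_mul]
  rw [hl, hrr]
  set r := Real.sqrt ((s.left.card : ℝ) * s.right.card) with hrdef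
  field_simp
  linear_combination (-((s.left.card : ℝ) + s.right.card)) * hr2

lemma sum_sq_dev (t : Finset (Fin n)) (y : Fin n → ℝ) :
    ∑ i ∈ t, (y i - meanOn y t) ^ 2 = ∑ i ∈ t, (y i) ^ 2 - (∑ i ∈ t, y i) ^ 2 / t.card := by
  rcases t.eq_empty_or_nonempty with rfl | ht
  · simp
  have hc : (t.card : ℝ) ≠ 0 := by exact_mod_cast ht.card_pos.ne'
  have : ∑ i ∈ t, (y i - meanOn y t) ^ 2
      = ∑ i ∈ t, ((y i) ^ 2 - 2 * meanOn y t * y i + meanOn y t ^ 2) :=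
    Finset.sum_congr rfl fun i _ => by ring
  rw [this, Finset.sum_add_distrib, Finset.sum_sub_distrib, ← Finset.mul_sum,
    Finset.sum_const, nsmul_eq_mul, meanOn]
  field_simp
  ring

lemma key_split (s : Split n) (y : Fin n → ℝ) :
    (s.node.card : ℝ) * impurityDecrease s y
      = ((∑ j, stump s j * y j) / ∑ j, stump s j ^ 2) * (∑ j, stump s j * y j) := by
  have hr := (sqrt_pos' s).ne'
  have hr2 : Real.sqrt ((s.left.card : ℝ) * s.right.card)
      * Real.sqrt ((s.left.card : ℝ) * s.right.card) = (s.left.card : ℝ) * s.right.card :=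
    Real.mul_self_sqrt (by positivity)
  have hL : (0:ℝ) < s.left.card := by exact_mod_cast s.left_nonempty.card_pos
  have hR : (0:ℝ) < s.right.card := by exact_mod_cast s.right_nonempty.card_pos
  have hnode : (s.node.card : ℝ) = (s.left.card : ℝ) + s.right.card := by
    rw [Split.node, Finset.card_union_of_disjoint s.disjoint]; push_cast; ring
  have hnodesum : ∑ i ∈ s.node, y i = ∑ i ∈ s.left, y i + ∑ i ∈ s.right, y i := by
    rw [Split.node, Finset.sum_union s.disjoint]
  have hnodesq : ∑ i ∈ s.node, (y i) ^ 2 = ∑ i ∈ s.left, (y i) ^ 2 + ∑ i ∈ s.right, (y i) ^ 2 := by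
    rw [Split.node, Finset.sum_union s.disjoint]
  set a := ∑ i ∈ s.left, y i with ha
  set b := ∑ i ∈ s.right, y i with hb
  set L := (s.left.card : ℝ) with hLdef
  set R := (s.right.card : ℝ) with hRdef
  have hI : ∑ j, stump s j * y j = (R * a - L * b) / Real.sqrt (L * R) := sum_stump_mul s y
  have hLR : L + R ≠ 0 := by positivity
  rw [impurityDecrease, sum_sq_dev, sum_sq_dev, sum_sq_dev, sum_stump_sq, hI, hnodesq,
    hnodesum, hnode, ← ha, ← hb, ← hLdef, ← hRdef]
  have hRHS : ((R * a - L * b) / Real.sqrt (L * R) / (L + R))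
        * ((R * a - L * b) / Real.sqrt (L * R))
      = (R * a - L * b) ^ 2 / (L * R * (L + R)) := by
    have h1 : (R * a - L * b) / Real.sqrt (L * R) / (L + R)
          * ((R * a - L * b) / Real.sqrt (L * R))
        = (R * a - L * b) * (R * a - L * b) / (Real.sqrt (L * R) * Real.sqrt (L * R))
          / (L + R) := by ring
    rw [h1, hr2, ← sq, div_div]
  rw [hRHS]
  field_simp
  ring

end AuxLemmas

/-- The MDI of feature `k` equals the sample covariance between the partial model predictions
(Saabas scores) `ŷ⁽ᵏ⁾ = ȳ·1 + Σ_{s ∈ S⁽ᵏ⁾} (⟨ψ_s, y⟩ / ‖ψ_s‖²) ψ_s` and the responses. -/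
theorem mdi_eq_cov_saabas_responses {n p : ℕ} (S : Finset (Split n))
    (hS : IsTreeStructure S) (feat : Split n → Fin p) (k : Fin p) (y : Fin n → ℝ)
    (ybar : ℝ) (hybar : ybar = (∑ i, y i) / n)
    (yhatk : Fin n → ℝ)
    (hyhatk : ∀ i, yhatk i = ybar + ∑ s ∈ S.filter (fun s => feat s = k),
        ((∑ j, stump s j * y j) / ∑ j, stump s j ^ 2) * stump s i) :
    MDI S feat k y = (n : ℝ)⁻¹ * ∑ i, (yhatk i - ybar) * (y i - ybar) := by
  rw [MDI]
  congr 1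
  have hsum : ∀ i, yhatk i - ybar = ∑ s ∈ S.filter (fun s => feat s = k),
      ((∑ j, stump s j * y j) / ∑ j, stump s j ^ 2) * stump s i := fun i => by
    rw [hyhatk i]; ring
  calc ∑ s ∈ S.filter (fun s => feat s = k), (s.node.card : ℝ) * impurityDecrease s y
      = ∑ s ∈ S.filter (fun s => feat s = k),
          ((∑ j, stump s j * y j) / ∑ j, stump s j ^ 2) * (∑ j, stump s j * y j) :=
        Finset.sum_congr rfl fun s _ => key_split s y
    _ = ∑ s ∈ S.filter (fun s => feat s = k),
          ((∑ j, stump s j * y j) / ∑ j, stump s j ^ 2)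
            * (∑ j, stump s j * (y j - ybar)) := by
        refine Finset.sum_congr rfl fun s _ => ?_
        congr 1
        have : ∑ j, stump s j * (y j - ybar)
            = (∑ j, stump s j * y j) - ybar * ∑ j, stump s j := by
          rw [Finset.mul_sum, ← Finset.sum_sub_distrib]
          exact Finset.sum_congr rfl fun j _ => by ring
        rw [this, sum_stump, mul_zero, sub_zero]
    _ = ∑ i, (yhatk i - ybar) * (y i - ybar) := by
        simp only [Finset.mul_sum]
        rw [Finset.sum_comm]
        refine Finset.sum_congr rfl fun i _ => ?_
        rw [hsum i, Finset.sum_mul]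
        exact Finset.sum_congr rfl fun s _ => by ring
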